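/- arXiv:2106.15393 — 5 statements merged into one kernel-verified Lean document; each statement's English description precedes it below -/
import Mathlib

section
/- Let q ∈ (0,1], let G₁, G₂ ~ Geom(q) be i.i.d. random variables, and let k₁, k₂ be integers with k₁ < k₂. Then min(k₁, G₁) + min(k₂, G₂) ⪯ min(k₁ + 1, G₁) + min(k₂ − 1, G₂), i.e., for all z ∈ ℝ, P(min(k₁, G₁) + min(k₂, G₂) ≥ z) ≤ P(min(k₁ + 1, G₁) + min(k₂ − 1, G₂) ≥ z). -/
open MeasureTheory ProbabilityTheory

/-!
Let `L` and `R` be the events that the left and the right sum are at least an integer `n`.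
Passing from the left sum to the right one adds `1` when `G₁ > k₁` and subtracts `1` when
`G₂ ≥ k₂`. Hence, when `k₂ < n ≤ k₁ + k₂` (otherwise `L \ R = ∅`), `L \ R` is the event
`{G₁ = n - k₂, G₂ ≥ k₂}` and `R \ L` the event `{G₁ ≥ k₁ + 1, G₂ = n - k₁ - 1}`. By independence
both have probability `q (1 - q) ^ (n - 2)`, so `P(L) ≤ P(R)`.
-/

theorem MeasureTheory.measure_le_of_measure_sdiff_le {α : Type*} [MeasurableSpace α]
    {μ : Measure α} {s t : Set α} (hs : MeasurableSet s) (ht : MeasurableSet t)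
    (h : μ (s \ t) ≤ μ (t \ s)) : μ s ≤ μ t :=
  calc μ s = μ (s ∩ t) + μ (s \ t) := (measure_inter_add_sdiff s ht).symm
    _ ≤ μ (t ∩ s) + μ (t \ s) := by rw [Set.inter_comm]; gcongr
    _ = μ t := measure_inter_add_sdiff t hs

namespace ProbabilityTheory

variable {Ω : Type*} [MeasurableSpace Ω] {μ : Measure Ω} {q : ℝ}

structure IsGeometric (μ : Measure Ω) (q : ℝ) (G : Ω → ℕ) : Prop where
  measurable : Measurable G
  one_le : ∀ ω, 1 ≤ G ω
  measure_eq : ∀ k : ℕ, 1 ≤ k → μ {ω | G ω = k} = ENNReal.ofReal ((1 - q) ^ (k - 1) * q)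

namespace IsGeometric

variable {G G₁ G₂ : Ω → ℕ}

theorem measure_add_one_le [IsProbabilityMeasure μ] (hG : IsGeometric μ q G) (hq0 : 0 ≤ q)
    (hq1 : q ≤ 1) (m : ℕ) : μ {ω | m + 1 ≤ G ω} = ENNReal.ofReal ((1 - q) ^ m) := by
  induction m with
  | zero => simp [hG.one_le]
  | succ m ih =>
    have hsplit : {ω | m + 1 ≤ G ω} = {ω | G ω = m + 1} ∪ {ω | m + 1 + 1 ≤ G ω} := by
      ext ω; simp only [Set.mem_ofPred_eq, Set.mem_union]; omega
    have hdisj : Disjoint {ω | G ω = m + 1} {ω | m + 1 + 1 ≤ G ω} :=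
      Set.disjoint_left.2 fun ω h₁ h₂ ↦ by simp_all
    rw [hsplit, measure_union hdisj (hG.measurable measurableSet_Ici),
      hG.measure_eq _ m.succ_pos, Nat.succ_sub_one] at ih
    have hq : ENNReal.ofReal ((1 - q) ^ m) =
        ENNReal.ofReal ((1 - q) ^ m * q) + ENNReal.ofReal ((1 - q) ^ (m + 1)) := by
      rw [← ENNReal.ofReal_add (by positivity) (by bound)]; ring_nf
    rw [hq] at ih
    exact (ENNReal.add_right_inj ENNReal.ofReal_ne_top).1 ih

theorem measure_eq_inter_le_of_indepFun [IsProbabilityMeasure μ] (h₁ : IsGeometric μ q G₁)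
    (h₂ : IsGeometric μ q G₂) (hindep : IndepFun G₁ G₂ μ) (hq0 : 0 ≤ q) (hq1 : q ≤ 1)
    (a b : ℕ) :
    μ ({ω | G₁ ω = a + 1} ∩ {ω | b + 1 ≤ G₂ ω}) = ENNReal.ofReal (q * (1 - q) ^ (a + b)) := by
  calc μ ({ω | G₁ ω = a + 1} ∩ {ω | b + 1 ≤ G₂ ω})
      = μ {ω | G₁ ω = a + 1} * μ {ω | b + 1 ≤ G₂ ω} :=
        hindep.measure_inter_preimage_eq_mul _ _ (measurableSet_singleton _) measurableSet_Ici
    _ = ENNReal.ofReal ((1 - q) ^ a * q) * ENNReal.ofReal ((1 - q) ^ b) := by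
        rw [h₁.measure_eq _ a.succ_pos, Nat.succ_sub_one, h₂.measure_add_one_le hq0 hq1]
    _ = ENNReal.ofReal (q * (1 - q) ^ (a + b)) := by
        rw [← ENNReal.ofReal_mul (by positivity)]; ring_nf

end IsGeometric

end ProbabilityTheory

section MinSum

variable {Ω : Type*} (G₁ G₂ : Ω → ℕ)

def minSumEvent (k₁ k₂ n : ℤ) : Set Ω :=
  {ω | n ≤ min k₁ (G₁ ω : ℤ) + min k₂ (G₂ ω : ℤ)}

theorem measurableSet_minSumEvent [MeasurableSpace Ω] {G₁ G₂ : Ω → ℕ} (hG₁ : Measurable G₁)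
    (hG₂ : Measurable G₂) (k₁ k₂ n : ℤ) : MeasurableSet (minSumEvent G₁ G₂ k₁ k₂ n) :=
  measurableSet_le measurable_const (by fun_prop)

variable {k₁ k₂ n : ℤ}

theorem minSumEvent_sdiff_eq_empty (hG₁ : ∀ ω, 1 ≤ G₁ ω) (hn : n ≤ k₂ ∨ k₁ + k₂ < n) :
    minSumEvent G₁ G₂ k₁ k₂ n \ minSumEvent G₁ G₂ (k₁ + 1) (k₂ - 1) n = ∅ := by
  ext ω
  have := hG₁ ω
  simp only [minSumEvent, Set.mem_sdiff, Set.mem_ofPred_eq, Set.mem_empty_iff_false, iff_false]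
  omega

theorem minSumEvent_sdiff_eq {a b : ℕ} (ha : a + 1 + k₂ = n) (hb : b + 1 = k₂)
    (hn : n ≤ k₁ + k₂) :
    minSumEvent G₁ G₂ k₁ k₂ n \ minSumEvent G₁ G₂ (k₁ + 1) (k₂ - 1) n =
      {ω | G₁ ω = a + 1} ∩ {ω | b + 1 ≤ G₂ ω} := by
  ext ω
  simp only [minSumEvent, Set.mem_sdiff, Set.mem_inter_iff, Set.mem_ofPred_eq]
  omega

theorem minSumEvent_shift_sdiff_eq {a b : ℕ} (ha : a = k₁) (hb : b + k₁ + 2 = n)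
    (hn : n ≤ k₁ + k₂) :
    minSumEvent G₁ G₂ (k₁ + 1) (k₂ - 1) n \ minSumEvent G₁ G₂ k₁ k₂ n =
      {ω | a + 1 ≤ G₁ ω} ∩ {ω | G₂ ω = b + 1} := by
  ext ω
  simp only [minSumEvent, Set.mem_sdiff, Set.mem_inter_iff, Set.mem_ofPred_eq]
  omega

end MinSum

/-- For i.i.d. `G₁, G₂ ~ Geom(q)` (on `{1, 2, …}`) and integers `k₁ < k₂`,
`min(k₁, G₁) + min(k₂, G₂) ⪯ min(k₁+1, G₁) + min(k₂-1, G₂)`. -/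
theorem stmt_3 {Ω : Type*} [MeasurableSpace Ω] (μ : Measure Ω) [IsProbabilityMeasure μ]
    (q : ℝ) (hq0 : 0 < q) (hq1 : q ≤ 1)
    (G₁ G₂ : Ω → ℕ) (hG₁ : Measurable G₁) (hG₂ : Measurable G₂)
    (hG₁pos : ∀ ω, 1 ≤ G₁ ω) (hG₂pos : ∀ ω, 1 ≤ G₂ ω)
    (hdist₁ : ∀ k : ℕ, 1 ≤ k →
      μ {ω | G₁ ω = k} = ENNReal.ofReal ((1 - q) ^ (k - 1) * q))
    (hdist₂ : ∀ k : ℕ, 1 ≤ k →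
      μ {ω | G₂ ω = k} = ENNReal.ofReal ((1 - q) ^ (k - 1) * q))
    (hindep : IndepFun G₁ G₂ μ)
    (k₁ k₂ : ℤ) (hk : k₁ < k₂) :
    ∀ z : ℝ,
      μ {ω | z ≤ ((min k₁ (G₁ ω : ℤ) + min k₂ (G₂ ω : ℤ) : ℤ) : ℝ)} ≤
        μ {ω | z ≤ ((min (k₁ + 1) (G₁ ω : ℤ) + min (k₂ - 1) (G₂ ω : ℤ) : ℤ) : ℝ)} := by
  intro z
  simp_rw [← Int.ceil_le]
  generalize ⌈z⌉ = n
  change μ (minSumEvent G₁ G₂ k₁ k₂ n) ≤ μ (minSumEvent G₁ G₂ (k₁ + 1) (k₂ - 1) n)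
  have h₁ : IsGeometric μ q G₁ := ⟨hG₁, hG₁pos, hdist₁⟩
  have h₂ : IsGeometric μ q G₂ := ⟨hG₂, hG₂pos, hdist₂⟩
  refine measure_le_of_measure_sdiff_le (measurableSet_minSumEvent hG₁ hG₂ k₁ k₂ n)
    (measurableSet_minSumEvent hG₁ hG₂ (k₁ + 1) (k₂ - 1) n) ?_
  by_cases hn : k₂ < n ∧ n ≤ k₁ + k₂
  · obtain ⟨a, ha⟩ : ∃ a : ℕ, a + 1 + k₂ = n := ⟨(n - k₂ - 1).toNat, by omega⟩
    obtain ⟨b, hb⟩ : ∃ b : ℕ, b + 1 = k₂ := ⟨(k₂ - 1).toNat, by omega⟩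
    obtain ⟨c, hc⟩ : ∃ c : ℕ, c = k₁ := ⟨k₁.toNat, by omega⟩
    obtain ⟨d, hd⟩ : ∃ d : ℕ, d + k₁ + 2 = n := ⟨(n - k₁ - 2).toNat, by omega⟩
    rw [minSumEvent_sdiff_eq G₁ G₂ ha hb hn.2, minSumEvent_shift_sdiff_eq G₁ G₂ hc hd hn.2,
      h₁.measure_eq_inter_le_of_indepFun h₂ hindep hq0.le hq1, Set.inter_comm,
      h₂.measure_eq_inter_le_of_indepFun h₁ hindep.symm hq0.le hq1, show a + b = d + c by omega]
  · rw [minSumEvent_sdiff_eq_empty G₁ G₂ hG₁pos (by omega), measure_empty]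
    exact zero_le
end

section
/- Let q ∈ (0,1], let m be a positive integer and let G₁, …, G_m ~ Geom(q) be i.i.d. random variables. Let k₁, …, k_m and k*₁, …, k*_m be non-negative integers with Σ_{i=1}^m k_i = Σ_{i=1}^m k*_i, and suppose the vector k* is balanced, i.e., |k*_i − k*_j| ≤ 1 for all i, j ∈ [m]. Then Σ_{i=1}^m (k*_i − G_i)₊ ⪯ Σ_{i=1}^m (k_i − G_i)₊, i.e., for all z ∈ ℝ, P(Σ_{i=1}^m (k*_i − G_i)₊ ≥ z) ≤ P(Σ_{i=1}^m (k_i − G_i)₊ ≥ z). -/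
/-
Write `X_c = (c - G)₊` for `G ~ Geom(q)`. Memorylessness gives the recursion
`X_{a+1} = a` with probability `q` and `X_{a+1} ~ X_a` otherwise. Hence, for `b < a`, replacing a
pair of entries `(a + 1, b)` by `(a, b + 1)` can only lower the law of the sum of two independent
copies in the stochastic order, and by independence this persists after adding the other
coordinates. Such transfers strictly decrease `∑ kᵢ²`, so they carry any `k` to a balanced vector
with the same sum, and any two such vectors are permutations of each other.
-/

open MeasureTheory ProbabilityTheory
open scoped ENNReal

namespace GeometricTransfer

noncomputable def geomWeight (q : ℝ) : ℕ → ℝ≥0∞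
  | 0 => 0
  | n + 1 => ENNReal.ofReal ((1 - q) ^ n * q)

lemma geomWeight_add_two {q : ℝ} (hq : q ≤ 1) (n : ℕ) :
    geomWeight q (n + 2) = ENNReal.ofReal (1 - q) * geomWeight q (n + 1) := by
  rw [geomWeight, geomWeight, ← ENNReal.ofReal_mul (by linarith), pow_succ]
  ring_nf

lemma measure_preimage_singleton_eq_geomWeight {Ω : Type*} [MeasurableSpace Ω] {μ : Measure Ω}
    {q : ℝ} {X : Ω → ℕ} (hpos : ∀ ω, 1 ≤ X ω)
    (hlaw : ∀ k : ℕ, 1 ≤ k → μ {ω | X ω = k} = ENNReal.ofReal ((1 - q) ^ (k - 1) * q)) (v : ℕ) :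
    μ (X ⁻¹' {v}) = geomWeight q v := by
  cases v with
  | zero =>
    rw [geomWeight, Set.preimage_singleton_eq_empty.mpr fun ⟨ω, hω⟩ => by
      have := hpos ω; omega, measure_empty]
  | succ n => exact (hlaw (n + 1) (by omega)).trans (by simp [geomWeight])

section Tails

/- For independent `Gᵢ` with point masses `w`, `singleTail`, `pairTail` and `tail` below are
`P(n ≤ ∑ᵢ (kᵢ - Gᵢ)₊)` for one, two and `|ι|` coordinates; truncated subtraction on `ℕ` is
exactly the positive part. -/

variable (w : ℕ → ℝ≥0∞)

noncomputable def singleTail (c n : ℕ) : ℝ≥0∞ :=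
  ∑' v, if n ≤ c - v then w v else 0

noncomputable def pairTail (a b n : ℕ) : ℝ≥0∞ :=
  ∑' u, ∑' v, if n ≤ (a - u) + (b - v) then w u * w v else 0

variable {w}

lemma singleTail_tsub_le {a b : ℕ} (hba : b ≤ a) (n : ℕ) :
    singleTail w a (n - b) ≤ singleTail w b (n - a) :=
  ENNReal.tsum_le_tsum fun v => by
    split_ifs with h₁ h₂
    · exact le_rfl
    · exact absurd (by omega) h₂
    · exact zero_le
    · exact le_rfl

lemma pairTail_comm (a b n : ℕ) : pairTail w a b n = pairTail w b a n := by
  rw [pairTail, pairTail, ENNReal.tsum_comm]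
  refine tsum_congr fun u => tsum_congr fun v => ?_
  rw [add_comm (b - u), mul_comm (w v)]

lemma pairTail_eq_tsum_succ (hw0 : w 0 = 0) (a b n : ℕ) :
    pairTail w a b n = ∑' u, ∑' v, if n ≤ (a - (u + 1)) + (b - v) then w (u + 1) * w v else 0 := by
  rw [pairTail, tsum_eq_zero_add' ENNReal.summable]
  simp [hw0]

lemma pairTail_succ_left {r : ℝ≥0∞} (hw0 : w 0 = 0) (hw : ∀ v, w (v + 2) = r * w (v + 1))
    (a b n : ℕ) :
    pairTail w (a + 1) b n = w 1 * singleTail w b (n - a) + r * pairTail w a b n := by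
  rw [pairTail_eq_tsum_succ hw0, tsum_eq_zero_add' ENNReal.summable, pairTail_eq_tsum_succ hw0,
    singleTail, ← ENNReal.tsum_mul_left, ← ENNReal.tsum_mul_left]
  congr 1
  · refine tsum_congr fun v => ?_
    rw [mul_ite, mul_zero]
    exact if_congr (by omega) rfl rfl
  · refine tsum_congr fun u => ?_
    rw [← ENNReal.tsum_mul_left]
    refine tsum_congr fun v => ?_
    rw [mul_ite, mul_zero, hw, mul_assoc]
    exact if_congr (by omega) rfl rfl

lemma pairTail_succ_right_le {r : ℝ≥0∞} (hw0 : w 0 = 0) (hw : ∀ v, w (v + 2) = r * w (v + 1))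
    {a b : ℕ} (hba : b < a) (n : ℕ) :
    pairTail w a (b + 1) n ≤ pairTail w (a + 1) b n := by
  rw [pairTail_comm, pairTail_succ_left hw0 hw, pairTail_succ_left hw0 hw, pairTail_comm b]
  gcongr
  exact singleTail_tsub_le hba.le n

end Tails

section Balanced

open Finset

variable {ι : Type*} [Fintype ι]

def IsBalanced (k : ι → ℕ) : Prop := ∀ i j, k i ≤ k j + 1

lemma IsBalanced.card_fiber {k : ι → ℕ} (hk : IsBalanced k) (d : ℕ) :
    #{i | k i = d} =
      if d = (∑ i, k i) / Fintype.card ι then Fintype.card ι - (∑ i, k i) % Fintype.card ι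
      else if d = (∑ i, k i) / Fintype.card ι + 1 then (∑ i, k i) % Fintype.card ι else 0 := by
  cases isEmpty_or_nonempty ι
  · simp
  obtain ⟨c, hval, i₀, hi₀⟩ : ∃ c, (∀ i, k i = c ∨ k i = c + 1) ∧ ∃ i₀, k i₀ = c := by
    obtain ⟨i₀, hi₀⟩ := Finite.exists_min k
    exact ⟨k i₀, fun i => by have := hk i i₀; have := hi₀ i; omega, i₀, rfl⟩
  have hsum : ∑ i, k i = Fintype.card ι * c + #{i | k i = c + 1} := by
    calc ∑ i, k i = ∑ i, (c + if k i = c + 1 then 1 else 0) :=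
          sum_congr rfl fun i _ => by rcases hval i with h | h <;> simp [h]
      _ = Fintype.card ι * c + #{i | k i = c + 1} := by simp [sum_add_distrib]
  have hlt : #{i | k i = c + 1} < Fintype.card ι :=
    card_lt_univ_of_notMem (x := i₀) (by simp [hi₀])
  have hcompl : #{i | ¬k i = c} = #{i | k i = c + 1} :=
    congrArg card <| filter_congr fun i _ => by rcases hval i with h | h <;> omega
  have hsplit := card_filter_add_card_filter_not (s := univ) (fun i => k i = c)
  rw [card_univ, hcompl] at hsplit
  rw [hsum, Nat.mul_add_div Fintype.card_pos, Nat.div_eq_of_lt hlt, Nat.mul_add_mod,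
    Nat.mod_eq_of_lt hlt, add_zero]
  split_ifs with h₁ h₂
  · rw [h₁]
    omega
  · rw [h₂]
  · rw [card_eq_zero, filter_eq_empty_iff]
    intro i _
    rcases hval i with h | h <;> omega

lemma IsBalanced.exists_perm {f g : ι → ℕ} (hf : IsBalanced f) (hg : IsBalanced g)
    (hsum : ∑ i, f i = ∑ i, g i) : ∃ σ : Equiv.Perm ι, g ∘ σ = f :=
  ⟨Equiv.ofFiberEquiv fun d => Fintype.equivOfCardEq <| by
      rw [Fintype.card_subtype, Fintype.card_subtype, hf.card_fiber, hg.card_fiber, hsum],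
    funext (Equiv.ofFiberEquiv_map _)⟩

end Balanced

section Pi

variable {ι : Type*} [Fintype ι] {w : ℕ → ℝ≥0∞}

variable (w) in
noncomputable def tail (k : ι → ℕ) (n : ℕ) : ℝ≥0∞ :=
  ∑' g : ι → ℕ, if n ≤ ∑ x, (k x - g x) then ∏ x, w (g x) else 0

lemma tail_comp_perm (k : ι → ℕ) (σ : Equiv.Perm ι) (n : ℕ) : tail w (k ∘ σ) n = tail w k n := by
  rw [tail, ← (Equiv.arrowCongr σ.symm (Equiv.refl ℕ)).tsum_eq, tail]
  refine tsum_congr fun g => ?_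
  simp only [Equiv.arrowCongr_apply, Equiv.symm_symm, Equiv.coe_refl, Function.comp_apply, id]
  rw [Equiv.sum_comp σ fun x => k x - g x, Equiv.prod_comp σ fun x => w (g x)]

lemma measure_le_sum_tsub_eq_tail {Ω : Type*} [MeasurableSpace Ω] {μ : Measure Ω}
    {G : ι → Ω → ℕ} (hG : ∀ i, Measurable (G i)) (hindep : iIndepFun G μ)
    (hlaw : ∀ i v, μ (G i ⁻¹' {v}) = w v) (k : ι → ℕ) (n : ℕ) :
    μ {ω | n ≤ ∑ i, (k i - G i ω)} = tail w k n := by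
  have hX : Measurable fun ω i => G i ω := measurable_pi_lambda _ hG
  change μ ((fun ω i => G i ω) ⁻¹' {g | n ≤ ∑ i, (k i - g i)}) = _
  rw [← Measure.map_apply hX (Set.to_countable _).measurableSet,
    ← Measure.tsum_indicator_apply_singleton _ _ (Set.to_countable _).measurableSet, tail]
  refine tsum_congr fun g => ?_
  rw [Set.indicator_apply, Measure.map_apply hX (measurableSet_singleton g)]
  have hfiber : (fun ω i => G i ω) ⁻¹' {g} = ⋂ i, G i ⁻¹' {g i} := by
    ext ω
    simp [funext_iff]
  rw [hfiber, hindep.meas_iInter fun i => ⟨{g i}, measurableSet_singleton _, rfl⟩]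
  simp only [hlaw, Set.mem_ofPred_eq]

variable [DecidableEq ι] {i j : ι}

def splitAtPair (hij : i ≠ j) : ℕ × ℕ × {h : ι → ℕ // h i = 0 ∧ h j = 0} ≃ (ι → ℕ) where
  toFun p := Function.update (Function.update p.2.2.1 i p.1) j p.2.1
  invFun g := ⟨g i, g j, Function.update (Function.update g i 0) j 0, by simp [hij]⟩
  left_inv := by
    rintro ⟨u, v, h, hi, hj⟩
    ext x <;> simp only [Function.update_apply] <;> split_ifs <;> simp_all
  right_inv g := by
    ext x
    simp only [Function.update_apply]
    split_ifs <;> simp_all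

@[to_additive]
lemma prod_update_update {α M : Type*} [CommMonoid M] (hij : i ≠ j) (F : ι → α → M) (f : ι → α)
    (a b : α) :
    ∏ x, F x (Function.update (Function.update f i a) j b x) =
      F i a * F j b * ∏ x ∈ ({i, j} : Finset ι)ᶜ, F x (f x) := by
  rw [← Finset.prod_mul_prod_compl {i, j}, Finset.prod_pair hij]
  simp only [Function.update_self, Function.update_of_ne hij]
  congr 1
  refine Finset.prod_congr rfl fun x hx => ?_
  simp only [Finset.mem_compl, Finset.mem_insert, Finset.mem_singleton, not_or] at hx
  rw [Function.update_of_ne hx.2, Function.update_of_ne hx.1]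

lemma tail_eq_tsum_pairTail (hij : i ≠ j) (k : ι → ℕ) (n : ℕ) :
    tail w k n = ∑' h : {h : ι → ℕ // h i = 0 ∧ h j = 0},
      pairTail w (k i) (k j) (n - ∑ x ∈ ({i, j} : Finset ι)ᶜ, (k x - h.1 x)) *
        ∏ x ∈ ({i, j} : Finset ι)ᶜ, w (h.1 x) := by
  rw [tail, ← (splitAtPair hij).tsum_eq fun g : ι → ℕ =>
    if n ≤ ∑ x, (k x - g x) then ∏ x, w (g x) else 0]
  simp only [ENNReal.tsum_prod']
  rw [tsum_congr fun u => ENNReal.tsum_comm, ENNReal.tsum_comm]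
  refine tsum_congr fun h => ?_
  rw [pairTail, ← ENNReal.tsum_mul_right]
  refine tsum_congr fun u => ?_
  rw [← ENNReal.tsum_mul_right]
  refine tsum_congr fun v => ?_
  simp only [splitAtPair, Equiv.coe_fn_mk, sum_update_update hij (fun x y => k x - y),
    prod_update_update hij (fun _ y => w y), ite_mul, zero_mul]
  exact if_congr (by omega) rfl rfl

lemma tail_transfer_le {r : ℝ≥0∞} (hw0 : w 0 = 0) (hw : ∀ v, w (v + 2) = r * w (v + 1))
    (hij : i ≠ j) {k : ι → ℕ} (hk : k j + 1 < k i) (n : ℕ) :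
    tail w (Function.update (Function.update k i (k i - 1)) j (k j + 1)) n ≤ tail w k n := by
  rw [tail_eq_tsum_pairTail hij, tail_eq_tsum_pairTail hij]
  refine ENNReal.tsum_le_tsum fun h => ?_
  have hrest : ∀ x ∈ ({i, j} : Finset ι)ᶜ,
      Function.update (Function.update k i (k i - 1)) j (k j + 1) x = k x := fun x hx => by
    simp only [Finset.mem_compl, Finset.mem_insert, Finset.mem_singleton, not_or] at hx
    rw [Function.update_of_ne hx.2, Function.update_of_ne hx.1]
  rw [Finset.sum_congr rfl fun x hx => by rw [hrest x hx], Function.update_self,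
    Function.update_of_ne hij, Function.update_self]
  gcongr
  calc pairTail w (k i - 1) (k j + 1) _ ≤ pairTail w (k i - 1 + 1) (k j) _ :=
        pairTail_succ_right_le hw0 hw (by omega) _
    _ = pairTail w (k i) (k j) _ := by rw [Nat.sub_add_cancel (by omega)]

lemma tail_le_of_isBalanced {r : ℝ≥0∞} (hw0 : w 0 = 0) (hw : ∀ v, w (v + 2) = r * w (v + 1))
    {k kstar : ι → ℕ} (hbal : IsBalanced kstar) (hsum : ∑ i, k i = ∑ i, kstar i) (n : ℕ) :
    tail w kstar n ≤ tail w k n := by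
  induction hN : ∑ i, k i ^ 2 using Nat.strong_induction_on generalizing k with
  | _ N ih =>
  by_cases hk : IsBalanced k
  · obtain ⟨σ, hσ⟩ := hk.exists_perm hbal hsum
    rw [← hσ, tail_comp_perm]
  obtain ⟨i, j, hij⟩ : ∃ i j, k j + 1 < k i := by simpa [IsBalanced] using hk
  have hne : i ≠ j := by rintro rfl; omega
  have hsq := sum_update_update hne (fun _ y => y ^ 2) k (k i - 1) (k j + 1)
  have hsq₀ := sum_update_update hne (fun _ y => y ^ 2) k (k i) (k j)
  have hlin := sum_update_update hne (fun _ y => y) k (k i - 1) (k j + 1)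
  have hlin₀ := sum_update_update hne (fun _ y => y) k (k i) (k j)
  simp only [Function.update_eq_self] at hsq hsq₀ hlin hlin₀
  refine (ih _ ?_ ?_ rfl).trans (tail_transfer_le hw0 hw hne hij n)
  · obtain ⟨a, ha⟩ : ∃ a, k i = a + 1 := ⟨k i - 1, by omega⟩
    rw [← hN, hsq, hsq₀, ha, Nat.add_sub_cancel]
    nlinarith
  · omega

end Pi

lemma le_cast_sum_max_sub_iff {ι : Type*} [Fintype ι] (z : ℝ) (k g : ι → ℕ) :
    z ≤ ((∑ i, max ((k i : ℤ) - g i) 0 : ℤ) : ℝ) ↔ ⌈z⌉₊ ≤ ∑ i, (k i - g i) := by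
  have hpos (i : ι) : max ((k i : ℤ) - g i) 0 = ((k i - g i : ℕ) : ℤ) := by omega
  simp only [hpos, ← Nat.cast_sum, Int.cast_natCast, Nat.ceil_le]

end GeometricTransfer

open GeometricTransfer in
theorem stmt_5_general {Ω : Type*} [MeasurableSpace Ω] (μ : Measure Ω)
    (q : ℝ) (hq1 : q ≤ 1)
    (m : ℕ)
    (G : Fin m → Ω → ℕ) (hGmeas : ∀ i, Measurable (G i))
    (hGpos : ∀ i ω, 1 ≤ G i ω)
    (hdist : ∀ i, ∀ k : ℕ, 1 ≤ k →
      μ {ω | G i ω = k} = ENNReal.ofReal ((1 - q) ^ (k - 1) * q))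
    (hindep : iIndepFun G μ)
    (k kstar : Fin m → ℕ)
    (hsum : ∑ i, k i = ∑ i, kstar i)
    (hbal : ∀ i j, |(kstar i : ℤ) - (kstar j : ℤ)| ≤ 1) :
    ∀ z : ℝ,
      μ {ω | z ≤ ((∑ i, max ((kstar i : ℤ) - (G i ω : ℤ)) 0 : ℤ) : ℝ)} ≤
        μ {ω | z ≤ ((∑ i, max ((k i : ℤ) - (G i ω : ℤ)) 0 : ℤ) : ℝ)} := by
  intro z
  have hlaw (i : Fin m) := measure_preimage_singleton_eq_geomWeight (hGpos i) (hdist i)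
  simp only [le_cast_sum_max_sub_iff z, measure_le_sum_tsub_eq_tail hGmeas hindep hlaw]
  refine tail_le_of_isBalanced rfl (geomWeight_add_two hq1) (fun i j => ?_) hsum _
  have := abs_le.mp (hbal i j)
  omega

/-- For i.i.d. `G₁, …, G_m ~ Geom(q)` (on `{1, 2, …}`) and non-negative integer
vectors `k`, `k*` with equal sums such that `k*` is balanced
(`|k*ᵢ - k*ⱼ| ≤ 1` for all `i, j`), one has
`Σᵢ (k*ᵢ - Gᵢ)₊ ⪯ Σᵢ (kᵢ - Gᵢ)₊`. -/
theorem stmt_5 {Ω : Type*} [MeasurableSpace Ω] (μ : Measure Ω) [IsProbabilityMeasure μ]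
    (q : ℝ) (hq0 : 0 < q) (hq1 : q ≤ 1)
    (m : ℕ) (hm : 0 < m)
    (G : Fin m → Ω → ℕ) (hGmeas : ∀ i, Measurable (G i))
    (hGpos : ∀ i ω, 1 ≤ G i ω)
    (hdist : ∀ i, ∀ k : ℕ, 1 ≤ k →
      μ {ω | G i ω = k} = ENNReal.ofReal ((1 - q) ^ (k - 1) * q))
    (hindep : iIndepFun G μ)
    (k kstar : Fin m → ℕ)
    (hsum : ∑ i, k i = ∑ i, kstar i)
    (hbal : ∀ i j, |(kstar i : ℤ) - (kstar j : ℤ)| ≤ 1) :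
    ∀ z : ℝ,
      μ {ω | z ≤ ((∑ i, max ((kstar i : ℤ) - (G i ω : ℤ)) 0 : ℤ) : ℝ)} ≤
        μ {ω | z ≤ ((∑ i, max ((k i : ℤ) - (G i ω : ℤ)) 0 : ℤ) : ℝ)} :=
  stmt_5_general μ q hq1 m G hGmeas hGpos hdist hindep k kstar hsum hbal
end

section
/- The function g : (0,1) → ℝ defined by g(λ) = (e^{−λ} + λ − 1)/λ is strictly concave on the interval (0,1). -/
/-!
Differentiating twice, `g''(λ) = (e^{-λ}(λ² + 2λ + 2) - 2) / λ³`, which is negative for every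
`λ > 0` because `e^λ > 1 + λ + λ²/2` there. So `g` is strictly concave on all of `(0, ∞)`.
-/

open Real Set

theorem Real.quadratic_lt_exp_of_pos {x : ℝ} (hx : 0 < x) : 1 + x + x ^ 2 / 2 < exp x := by
  have h := sum_le_exp_of_nonneg hx.le 4
  simp only [Finset.sum_range_succ, Finset.sum_range_zero, Nat.factorial] at h
  norm_num at h
  nlinarith [pow_pos hx 3]

theorem Real.exp_neg_mul_quadratic_lt_two {x : ℝ} (hx : 0 < x) :
    exp (-x) * (x ^ 2 + 2 * x + 2) < 2 := by
  rw [exp_neg, inv_mul_lt_iff₀ (exp_pos x)]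
  linarith [quadratic_lt_exp_of_pos hx]

theorem Real.hasDerivAt_exp_neg_add_sub_one_div {x : ℝ} (hx : x ≠ 0) :
    HasDerivAt (fun y => (exp (-y) + y - 1) / y) ((1 - (x + 1) * exp (-x)) / x ^ 2) x := by
  have hnum : HasDerivAt (fun y => exp (-y) + y - 1) (-exp (-x) + 1) x := by
    simpa using (((hasDerivAt_neg x).exp).add (hasDerivAt_id x)).sub_const 1
  refine (hnum.div (hasDerivAt_id x) hx).congr_deriv ?_
  simp only [id]
  ring

theorem Real.hasDerivAt_one_sub_add_one_mul_exp_neg_div_sq {x : ℝ} (hx : x ≠ 0) :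
    HasDerivAt (fun y => (1 - (y + 1) * exp (-y)) / y ^ 2)
      ((exp (-x) * (x ^ 2 + 2 * x + 2) - 2) / x ^ 3) x := by
  have hnum : HasDerivAt (fun y => 1 - (y + 1) * exp (-y)) (x * exp (-x)) x := by
    refine ((((hasDerivAt_id x).add_const 1).mul (hasDerivAt_neg x).exp).const_sub 1).congr_deriv
      ?_
    simp only [id]
    ring
  refine (hnum.div (hasDerivAt_pow 2 x) (pow_ne_zero 2 hx)).congr_deriv ?_
  field_simp
  ring

theorem Real.deriv2_exp_neg_add_sub_one_div {x : ℝ} (hx : x ≠ 0) :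
    deriv^[2] (fun y => (exp (-y) + y - 1) / y) x =
      (exp (-x) * (x ^ 2 + 2 * x + 2) - 2) / x ^ 3 := by
  have hderiv : deriv (fun y => (exp (-y) + y - 1) / y) =ᶠ[nhds x]
      fun y => (1 - (y + 1) * exp (-y)) / y ^ 2 :=
    (eventually_ne_nhds hx).mono fun y hy => (hasDerivAt_exp_neg_add_sub_one_div hy).deriv
  rw [Function.iterate_succ_apply', Function.iterate_one, hderiv.deriv_eq]
  exact (hasDerivAt_one_sub_add_one_mul_exp_neg_div_sq hx).deriv

theorem Real.strictConcaveOn_exp_neg_add_sub_one_div :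
    StrictConcaveOn ℝ (Ioi 0) (fun x => (exp (-x) + x - 1) / x) := by
  refine strictConcaveOn_of_deriv2_neg' (convex_Ioi 0) ?_ fun x (hx : 0 < x) => ?_
  · exact fun x hx =>
      (hasDerivAt_exp_neg_add_sub_one_div (ne_of_gt hx)).continuousAt.continuousWithinAt
  rw [deriv2_exp_neg_add_sub_one_div hx.ne']
  exact div_neg_of_neg_of_pos (sub_neg.2 (exp_neg_mul_quadratic_lt_two hx)) (pow_pos hx 3)

/-- The function `λ ↦ (e^{-λ} + λ - 1)/λ` is strictly concave on `(0,1)`. -/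
theorem stmt_7 :
    StrictConcaveOn ℝ (Set.Ioo (0 : ℝ) 1)
      (fun lam : ℝ => (Real.exp (-lam) + lam - 1) / lam) :=
  strictConcaveOn_exp_neg_add_sub_one_div.subset Ioo_subset_Ioi_self (convex_Ioo 0 1)
end

section
/- Fix A > 0. Then lim_{λ → 0⁺} (1/λ) · [ 1 + ( (1 − λ²/A)^{A/λ} − 1 ) / ( (λ − λ²/A)(1 − λ²/A) ) ] = 1/2 − 1/A. -/
/-!
Write `(1 - λ²/A)^(A/λ) = exp u` with `u = (A/λ) log (1 - λ²/A) = -λ + O(λ³)`. Then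
`exp u = exp (-λ) + O(λ³) = 1 - λ + λ²/2 + O(λ³)`, while the denominator is
`λ (1 - λ/A)(1 - λ²/A) = λ - λ²/A + O(λ³)`. The bracket is therefore
`((1/2 - 1/A) λ² + O(λ³)) / (λ + O(λ²))`, and dividing by `λ` gives the limit.
-/

open Filter Topology Asymptotics

namespace Real

lemma isBigO_log_one_sub_add_self : (fun s : ℝ => log (1 - s) + s) =O[𝓝 0] (· ^ 2) := by
  refine IsBigO.of_bound 2 ?_
  filter_upwards [Ioo_mem_nhds (by norm_num : -(1 / 2 : ℝ) < 0) (by norm_num : (0 : ℝ) < 1 / 2)]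
    with s ⟨hs₁, hs₂⟩
  have hs : |s| ≤ 1 / 2 := abs_le.2 ⟨hs₁.le, hs₂.le⟩
  have h := abs_log_sub_add_sum_range_le (hs.trans_lt (by norm_num)) 1
  simp only [Finset.range_one, Finset.sum_singleton, pow_one, Nat.cast_zero, zero_add, div_one] at h
  rw [norm_pow, Real.norm_eq_abs, Real.norm_eq_abs, add_comm]
  calc |s + log (1 - s)| ≤ |s| ^ 2 / (1 - |s|) := h
    _ ≤ 2 * |s| ^ 2 := by
      rw [div_le_iff₀ (by linarith)]
      nlinarith [sq_nonneg |s|]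

lemma isBigO_exp_sub_exp {α : Type*} {l : Filter α} {f g k : α → ℝ} {b : ℝ}
    (hg : Tendsto g l (𝓝 b)) (hfg : (fun x => f x - g x) =O[l] k) (hk : Tendsto k l (𝓝 0)) :
    (fun x => exp (f x) - exp (g x)) =O[l] k := by
  have hexp : (fun x => exp (f x - g x) - 1) =O[l] fun x => f x - g x := by
    simpa [Function.comp_def] using
      (exp_sub_sum_range_isBigO_pow 1).comp_tendsto (hfg.trans_tendsto hk)
  have hbdd : (fun x => exp (g x)) =O[l] fun _ => (1 : ℝ) :=
    ((continuous_exp.tendsto b).comp hg).isBigO_one ℝ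
  refine ((hbdd.mul (hexp.trans hfg)).congr_left fun x => ?_).congr_right fun x => one_mul _
  rw [mul_sub, ← exp_add, add_sub_cancel, mul_one]

lemma isBigO_exp_neg_sub_taylor :
    (fun x : ℝ => exp (-x) - (1 - x + x ^ 2 / 2)) =O[𝓝 0] (· ^ 3) := by
  have h := (exp_sub_sum_range_isBigO_pow 3).comp_tendsto
    (continuous_neg.tendsto' (0 : ℝ) 0 neg_zero)
  refine (h.congr_left fun x => ?_).trans (isBigO_of_le _ fun x => ?_)
  · simp [Finset.sum_range_succ]
    ring
  · simp

end Real

lemma isBigO_log_one_sub_sq_div_mul_div_add_self {A : ℝ} (hA : A ≠ 0) :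
    (fun l : ℝ => Real.log (1 - l ^ 2 / A) * (A / l) + l) =O[𝓝 0] (· ^ 3) := by
  have hsq : Tendsto (fun l : ℝ => l ^ 2 / A) (𝓝 0) (𝓝 0) := by
    simpa using ((continuous_pow 2).div_const A).tendsto (0 : ℝ)
  have h := (isBigO_refl (fun l : ℝ => A / l) _).mul
    (Real.isBigO_log_one_sub_add_self.comp_tendsto hsq)
  -- Both identities also hold at `l = 0`, where `A / 0 = 0`.
  refine (h.congr (fun l => ?_) (fun l => ?_)).trans (isBigO_const_mul_self A⁻¹ _ _) <;>
  · rcases eq_or_ne l 0 with rfl | hl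
    · simp
    · simp only [Function.comp_apply]
      field_simp

lemma isBigO_one_sub_sq_div_rpow_sub_taylor {A : ℝ} (hA : A ≠ 0) :
    (fun l : ℝ => (1 - l ^ 2 / A) ^ (A / l) - (1 - l + l ^ 2 / 2)) =O[𝓝 0] (· ^ 3) := by
  have hexp := Real.isBigO_exp_sub_exp (continuous_neg.tendsto' (0 : ℝ) 0 neg_zero)
    (by simpa only [sub_neg_eq_add] using isBigO_log_one_sub_sq_div_mul_div_add_self hA)
    ((continuous_pow 3).tendsto' 0 0 (zero_pow three_ne_zero))
  have hpos : ∀ᶠ l : ℝ in 𝓝 0, 0 < 1 - l ^ 2 / A :=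
    ((continuous_const.sub ((continuous_pow 2).div_const A)).tendsto' 0 1 (by simp)).eventually
      (eventually_gt_nhds one_pos)
  refine (hexp.add Real.isBigO_exp_neg_sub_taylor).congr' ?_ EventuallyEq.rfl
  filter_upwards [hpos] with l hl
  rw [Real.rpow_def_of_pos hl]
  ring

lemma one_div_mul_one_add_div_eq {A l E : ℝ} (hA : A ≠ 0) (hl : l ≠ 0) (h₁ : A - l ≠ 0)
    (h₂ : A - l ^ 2 ≠ 0) :
    1 / l * (1 + (E - 1) / ((l - l ^ 2 / A) * (1 - l ^ 2 / A))) =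
      ((E - (1 - l + l ^ 2 / 2)) / l ^ 2 + (1 / 2 - 1 / A - l / A + l ^ 2 / A ^ 2)) /
        ((1 - l / A) * (1 - l ^ 2 / A)) := by
  field_simp
  ring

/-- For fixed `A > 0`,
`lim_{λ → 0⁺} (1/λ)·[1 + ((1 - λ²/A)^{A/λ} - 1)/((λ - λ²/A)(1 - λ²/A))] = 1/2 - 1/A`. -/
theorem stmt_13 (A : ℝ) (hA : 0 < A) :
    Tendsto
      (fun lam : ℝ =>
        (1 / lam) *
          (1 + ((1 - lam ^ 2 / A) ^ (A / lam) - 1) /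
              ((lam - lam ^ 2 / A) * (1 - lam ^ 2 / A))))
      (nhdsWithin 0 (Set.Ioi 0)) (nhds (1 / 2 - 1 / A)) := by
  have hR := ((isBigO_one_sub_sq_div_rpow_sub_taylor hA.ne').trans_isLittleO
    (isLittleO_pow_pow (by norm_num : 2 < 3))).tendsto_div_nhds_zero
  have hpoly : Tendsto (fun l : ℝ => 1 / 2 - 1 / A - l / A + l ^ 2 / A ^ 2) (𝓝 0)
      (𝓝 (1 / 2 - 1 / A)) := by
    simpa using
      (by fun_prop : Continuous fun l : ℝ => 1 / 2 - 1 / A - l / A + l ^ 2 / A ^ 2).tendsto 0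
  have hden : Tendsto (fun l : ℝ => (1 - l / A) * (1 - l ^ 2 / A)) (𝓝 0) (𝓝 1) := by
    simpa using (by fun_prop : Continuous fun l : ℝ => (1 - l / A) * (1 - l ^ 2 / A)).tendsto 0
  have hlim := ((hR.add hpoly).div hden one_ne_zero).mono_left
    (nhdsWithin_le_nhds (s := Set.Ioi 0))
  rw [zero_add, div_one] at hlim
  have h₁ : ∀ᶠ l : ℝ in 𝓝 0, A - l ≠ 0 :=
    (continuous_const.sub continuous_id).continuousAt.eventually_ne (by simpa using hA.ne')
  have h₂ : ∀ᶠ l : ℝ in 𝓝 0, A - l ^ 2 ≠ 0 :=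
    (continuous_const.sub (continuous_pow 2)).continuousAt.eventually_ne (by simpa using hA.ne')
  refine hlim.congr' ?_
  filter_upwards [self_mem_nhdsWithin, nhdsWithin_le_nhds h₁, nhdsWithin_le_nhds h₂]
    with l hl h₁ h₂
  exact (one_div_mul_one_add_div_eq hA.ne' (ne_of_gt hl) h₁ h₂).symm
end

section
/- Let λ₀ ∈ (0,1) and let N be a positive integer with ⌊λ₀N⌋ ≥ 2 and N ≥ 2. Let G ~ Geom(1/N). Then E[(1 − (G+1)/(λ₀N))₊] ≥ 1 + ( (1 − 1/N)^{λ₀N} − 1 ) / ( (λ₀ − 1/N)(1 − 1/N) ). -/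
/-!
With `q = 1/N` and `c = λ₀N`, the expectation is bounded below by the truncated sum
`∑_{k=1}^{K} (1 - (k+1)/c) q (1-q)^{k-1}` with `K = ⌊c⌋ - 1`, which has a closed form. Since
`c - 2 < K ≤ c - 1`, the tail term of the closed form is at most `-(1-q)^c`, and what remains
follows from `(1-q)^c (1 + λ₀) ≤ e^{-λ₀} e^{λ₀} = 1`.
-/

open MeasureTheory ProbabilityTheory

lemma sum_mul_measureReal_preimage_le_integral {Ω α : Type*} [MeasurableSpace Ω]
    [MeasurableSpace α] [MeasurableSingletonClass α] {μ : Measure Ω} {G : Ω → α}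
    (hG : Measurable G) {g : α → ℝ} (hg : ∀ a, 0 ≤ g a)
    (hint : Integrable (fun ω => g (G ω)) μ) (s : Finset α) :
    ∑ a ∈ s, g a * μ.real (G ⁻¹' {a}) ≤ ∫ ω, g (G ω) ∂μ := by
  have hmeas : ∀ a, MeasurableSet (G ⁻¹' {a}) := fun a => hG (measurableSet_singleton a)
  calc ∑ a ∈ s, g a * μ.real (G ⁻¹' {a})
      = ∑ a ∈ s, ∫ ω in G ⁻¹' {a}, g (G ω) ∂μ := by
        refine Finset.sum_congr rfl fun a _ => ?_
        rw [setIntegral_congr_fun (hmeas a) (fun ω (hω : G ω = a) => by rw [hω]),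
          setIntegral_const, smul_eq_mul, mul_comm]
    _ = ∫ ω in ⋃ a ∈ s, G ⁻¹' {a}, g (G ω) ∂μ :=
        (integral_biUnion_finset s (fun a _ => hmeas a)
          (fun a _ b _ hab => (Set.disjoint_singleton.2 hab).preimage G)
          (fun a _ => hint.integrableOn)).symm
    _ ≤ ∫ ω, g (G ω) ∂μ := setIntegral_le_integral hint (ae_of_all _ fun ω => hg (G ω))

lemma sum_Icc_one_sub_div_mul_geometric (q c : ℝ) (hq : q ≠ 0) (hc : c ≠ 0) (K : ℕ) :
    ∑ k ∈ Finset.Icc 1 K, (1 - ((k : ℝ) + 1) / c) * ((1 - q) ^ (k - 1) * q)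
      = 1 - (1 + q) / (q * c) - (1 - q) ^ K * (q * c - 1 - q - K * q) / (q * c) := by
  induction K with
  | zero =>
    simp only [zero_lt_one, Finset.Icc_eq_empty_of_lt, Finset.sum_empty, pow_zero,
      CharP.cast_eq_zero, zero_mul, sub_zero, one_mul]
    field_simp
    ring
  | succ n ih =>
    rw [Finset.sum_Icc_succ_top (by omega), ih, Nat.add_sub_cancel]
    push_cast
    field_simp
    ring

lemma one_sub_rpow_mul_one_add_le_one {q c : ℝ} (hq0 : 0 ≤ q) (hq1 : q ≤ 1) (hc : 0 ≤ c) :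
    (1 - q) ^ c * (1 + q * c) ≤ 1 :=
  calc (1 - q) ^ c * (1 + q * c) ≤ Real.exp (-q) ^ c * Real.exp (q * c) := by
        have hpow : (1 - q) ^ c ≤ Real.exp (-q) ^ c :=
          Real.rpow_le_rpow (by linarith) (Real.one_sub_le_exp_neg q) hc
        have hlin : 1 + q * c ≤ Real.exp (q * c) := by linarith [Real.add_one_le_exp (q * c)]
        exact mul_le_mul hpow hlin (by positivity) (by positivity)
    _ = 1 := by rw [← Real.exp_mul, ← Real.exp_add]; simp

lemma one_sub_pow_mul_le_neg_rpow {q c : ℝ} {K : ℕ} (hq0 : 0 < q) (hq1 : q < 1)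
    (hKc : (K : ℝ) ≤ c - 1) (hcK : c < K + 2) :
    (1 - q) ^ K * (q * c - 1 - q - K * q) ≤ -(1 - q) ^ c := by
  have hpow : (1 - q) ^ (c - 1) ≤ (1 - q) ^ K := by
    rw [← Real.rpow_natCast]
    exact Real.rpow_le_rpow_of_exponent_ge (by linarith) (by linarith) hKc
  have hfac : q * c - 1 - q - K * q ≤ -(1 - q) := by nlinarith
  calc (1 - q) ^ K * (q * c - 1 - q - K * q) ≤ (1 - q) ^ K * -(1 - q) := by gcongr
    _ ≤ (1 - q) ^ (c - 1) * -(1 - q) := mul_le_mul_of_nonpos_right hpow (by linarith)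
    _ = -(1 - q) ^ c := by rw [mul_neg, ← Real.rpow_add_one (by linarith), sub_add_cancel]

lemma one_add_div_le_closed_form {q c : ℝ} {K : ℕ} (hq0 : 0 < q) (hq1 : q < 1) (hc : 1 < c)
    (hKc : (K : ℝ) ≤ c - 1) (hcK : c < K + 2) :
    1 + ((1 - q) ^ c - 1) / ((q * c - q) * (1 - q))
      ≤ 1 - (1 + q) / (q * c) - (1 - q) ^ K * (q * c - 1 - q - K * q) / (q * c) := by
  have hexp := one_sub_rpow_mul_one_add_le_one hq0.le hq1.le (by linarith : 0 ≤ c)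
  have htail := one_sub_pow_mul_le_neg_rpow hq0 hq1 hKc hcK
  set B := (1 - q) ^ c
  have hB : 0 < B := Real.rpow_pos_of_pos (by linarith) c
  have hqcq : 0 < q * c - q := by nlinarith
  have hD : 0 < (q * c - q) * (1 - q) := mul_pos hqcq (by linarith)
  have hqc : 0 < q * c := by positivity
  have hmain : (B - 1) / ((q * c - q) * (1 - q)) ≤ (B - 1 - q) / (q * c) := by
    rw [div_le_div_iff₀ hD hqc]
    nlinarith [mul_nonneg hq0.le (sub_nonneg.2 hexp), mul_pos hq0 (add_pos hB hqcq)]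
  have htail' : (1 - q) ^ K * (q * c - 1 - q - K * q) / (q * c) ≤ -B / (q * c) := by
    gcongr
  have hsplit : (B - 1 - q) / (q * c) = 1 - (1 + q) / (q * c) - -B / (q * c) - 1 := by
    field_simp; ring
  linarith

lemma integrable_max_one_sub_add_one_div {Ω : Type*} [MeasurableSpace Ω] {μ : Measure Ω}
    [IsFiniteMeasure μ] {G : Ω → ℕ} (hG : Measurable G) {c : ℝ} (hc : 0 ≤ c) :
    Integrable (fun ω => max (1 - ((G ω : ℝ) + 1) / c) 0) μ := by
  refine Integrable.of_bound (by fun_prop) 1 (ae_of_all _ fun ω => ?_)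
  have : 0 ≤ ((G ω : ℝ) + 1) / c := by positivity
  rw [Real.norm_of_nonneg (le_max_right _ _)]
  exact max_le (by linarith) zero_le_one

lemma exists_nat_le_sub_one_lt_add_two {c : ℝ} (hc : 1 ≤ c) :
    ∃ K : ℕ, (K : ℝ) ≤ c - 1 ∧ c < K + 2 := by
  refine ⟨⌊c⌋₊ - 1, ?_, ?_⟩ <;>
    rw [Nat.cast_sub (Nat.le_floor (by simpa using hc)), Nat.cast_one]
  · linarith [Nat.floor_le (by linarith : 0 ≤ c)]
  · linarith [Nat.lt_floor_add_one c]

theorem stmt_18_general {Ω : Type*} [MeasurableSpace Ω] (μ : Measure Ω) [IsProbabilityMeasure μ]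
    (lam₀ : ℝ)
    (N : ℕ) (hN : 2 ≤ N) (hfloor : 2 ≤ ⌊lam₀ * (N : ℝ)⌋)
    (G : Ω → ℕ) (hG : Measurable G)
    (hdist : ∀ k : ℕ, 1 ≤ k →
      μ {ω | G ω = k} = ENNReal.ofReal ((1 - 1 / (N : ℝ)) ^ (k - 1) * (1 / (N : ℝ)))) :
    1 + ((1 - 1 / (N : ℝ)) ^ (lam₀ * (N : ℝ)) - 1) /
        ((lam₀ - 1 / (N : ℝ)) * (1 - 1 / (N : ℝ))) ≤
      ∫ ω, max (1 - ((G ω : ℝ) + 1) / (lam₀ * N)) 0 ∂μ := by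
  set q : ℝ := 1 / (N : ℝ)
  set c : ℝ := lam₀ * N
  have hN2 : (2 : ℝ) ≤ N := by exact_mod_cast hN
  have hq0 : 0 < q := by positivity
  have hq1 : q < 1 := by rw [div_lt_one (by linarith)]; linarith
  have hc2 : (2 : ℝ) ≤ c := by exact_mod_cast Int.le_floor.1 hfloor
  have hlam : lam₀ = q * c := by simp only [q, c]; field_simp
  obtain ⟨K, hKc, hcK⟩ := exists_nat_le_sub_one_lt_add_two (by linarith : 1 ≤ c)
  calc 1 + ((1 - q) ^ c - 1) / ((lam₀ - q) * (1 - q))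
      ≤ 1 - (1 + q) / (q * c) - (1 - q) ^ K * (q * c - 1 - q - K * q) / (q * c) := by
        rw [hlam]; exact one_add_div_le_closed_form hq0 hq1 (by linarith) hKc hcK
    _ = ∑ k ∈ Finset.Icc 1 K, (1 - ((k : ℝ) + 1) / c) * μ.real (G ⁻¹' {k}) := by
        rw [← sum_Icc_one_sub_div_mul_geometric q c hq0.ne' (by linarith) K]
        refine Finset.sum_congr rfl fun k hk => ?_
        rw [measureReal_def, show G ⁻¹' {k} = {ω | G ω = k} from rfl,
          hdist k (Finset.mem_Icc.1 hk).1, ENNReal.toReal_ofReal (by positivity)]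
    _ ≤ ∑ k ∈ Finset.Icc 1 K, max (1 - ((k : ℝ) + 1) / c) 0 * μ.real (G ⁻¹' {k}) := by
        gcongr; exact le_max_left _ _
    _ ≤ ∫ ω, max (1 - ((G ω : ℝ) + 1) / c) 0 ∂μ :=
        sum_mul_measureReal_preimage_le_integral hG (fun _ => le_max_right _ _)
          (integrable_max_one_sub_add_one_div hG (by linarith)) _

/-- For `λ₀ ∈ (0,1)` and a positive integer `N` with `⌊λ₀N⌋ ≥ 2` and `N ≥ 2`, if
`G ~ Geom(1/N)` (on `{1, 2, …}`), then
`E[(1 - (G+1)/(λ₀N))₊] ≥ 1 + ((1 - 1/N)^{λ₀N} - 1)/((λ₀ - 1/N)(1 - 1/N))`. -/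
theorem stmt_18 {Ω : Type*} [MeasurableSpace Ω] (μ : Measure Ω) [IsProbabilityMeasure μ]
    (lam₀ : ℝ) (h0 : 0 < lam₀) (h1 : lam₀ < 1)
    (N : ℕ) (hN : 2 ≤ N) (hfloor : 2 ≤ ⌊lam₀ * (N : ℝ)⌋)
    (G : Ω → ℕ) (hG : Measurable G) (hGpos : ∀ ω, 1 ≤ G ω)
    (hdist : ∀ k : ℕ, 1 ≤ k →
      μ {ω | G ω = k} = ENNReal.ofReal ((1 - 1 / (N : ℝ)) ^ (k - 1) * (1 / (N : ℝ)))) :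
    1 + ((1 - 1 / (N : ℝ)) ^ (lam₀ * (N : ℝ)) - 1) /
        ((lam₀ - 1 / (N : ℝ)) * (1 - 1 / (N : ℝ))) ≤
      ∫ ω, max (1 - ((G ω : ℝ) + 1) / (lam₀ * N)) 0 ∂μ :=
  stmt_18_general μ lam₀ N hN hfloor G hG hdist
end
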